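/- arXiv:1901.09788 — 3 statements merged into one kernel-verified Lean document; each statement's English description precedes it below -/
import Mathlib

section
/- There exists a function u ∈ C²(ℝ²) that is not affine (i.e. not of the form u(x,y) = ax + by + c) and satisfies the equation (1 + u_x²)·u_xx + 2·u_x·u_y·u_xy + (1 + u_y²)·u_yy = 0 at every point of ℝ². -/
noncomputable def ux (u : ℝ → ℝ → ℝ) (x y : ℝ) : ℝ := deriv (fun t => u t y) x
noncomputable def uy (u : ℝ → ℝ → ℝ) (x y : ℝ) : ℝ := deriv (fun t => u x t) y
noncomputable def uxx (u : ℝ → ℝ → ℝ) (x y : ℝ) : ℝ := deriv (fun t => ux u t y) x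
noncomputable def uxy (u : ℝ → ℝ → ℝ) (x y : ℝ) : ℝ := deriv (fun t => ux u x t) y
noncomputable def uyy (u : ℝ → ℝ → ℝ) (x y : ℝ) : ℝ := deriv (fun t => uy u x t) y

def IsAffine (u : ℝ → ℝ → ℝ) : Prop := ∃ a b c : ℝ, ∀ x y : ℝ, u x y = a * x + b * y + c

/-!
Look for a separable solution `u x y = f x + k y`. The mixed term vanishes, and the equation
reduces to `(1 + f'²) f'' = c = -(1 + k'²) k''`. For `c = 1` this says that `f'` inverts the
cubic `t ↦ t + t³/3`, whose derivative is `1 + t²`; this inverse `g` is smooth, and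
`f = g²/2 + g⁴/4` is a primitive of it since `(g + g³) g' = g`. Taking `k = -f` gives a
solution which is not affine because `u_x = g` is injective.
-/

open Set

section Separable

variable (f k : ℝ → ℝ) (x y : ℝ)

theorem ux_add_separable : ux (fun x y => f x + k y) x y = deriv f x :=
  deriv_add_const _

theorem uy_add_separable : uy (fun x y => f x + k y) x y = deriv k y :=
  deriv_const_add _

theorem uxx_add_separable : uxx (fun x y => f x + k y) x y = deriv (deriv f) x := by
  simp only [uxx, ux_add_separable]

theorem uxy_add_separable : uxy (fun x y => f x + k y) x y = 0 := by
  simp only [uxy, ux_add_separable, deriv_const]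

theorem uyy_add_separable : uyy (fun x y => f x + k y) x y = deriv (deriv k) y := by
  simp only [uyy, uy_add_separable]

variable {f k} in
theorem wrongMinimalSurface_add_separable {c : ℝ}
    (hf : ∀ x, (1 + deriv f x ^ 2) * deriv (deriv f) x = c)
    (hk : ∀ y, (1 + deriv k y ^ 2) * deriv (deriv k) y = -c) :
    (1 + ux (fun x y => f x + k y) x y ^ 2) * uxx (fun x y => f x + k y) x y +
      2 * ux (fun x y => f x + k y) x y * uy (fun x y => f x + k y) x y *
        uxy (fun x y => f x + k y) x y +
      (1 + uy (fun x y => f x + k y) x y ^ 2) * uyy (fun x y => f x + k y) x y = 0 := by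
  rw [ux_add_separable, uy_add_separable, uxx_add_separable, uxy_add_separable,
    uyy_add_separable, hf, hk]
  ring

theorem one_add_sq_deriv_mul_deriv_deriv_neg :
    (1 + deriv (-f) x ^ 2) * deriv (deriv (-f)) x =
      -((1 + deriv f x ^ 2) * deriv (deriv f) x) := by
  simp only [deriv.neg', deriv.fun_neg', neg_sq, mul_neg]

end Separable

theorem IsAffine.exists_ux_eq {u : ℝ → ℝ → ℝ} (hu : IsAffine u) :
    ∃ a, ∀ x y, ux u x y = a := by
  obtain ⟨a, b, c, hu⟩ := hu
  refine ⟨a, fun x y => ?_⟩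
  simp [ux, hu]

namespace WrongMinimalSurface

noncomputable section

def cubic (t : ℝ) : ℝ := t + t ^ 3 / 3

theorem hasDerivAt_cubic (t : ℝ) : HasDerivAt cubic (1 + t ^ 2) t :=
  ((hasDerivAt_id' t).add ((hasDerivAt_pow 3 t).div_const 3)).congr_deriv (by norm_num)

theorem contDiff_cubic {n : WithTop ℕ∞} : ContDiff ℝ n cubic := by
  unfold cubic
  fun_prop

theorem strictMono_cubic : StrictMono cubic :=
  strictMono_id.add ((Odd.strictMono_pow (by decide : Odd 3)).div_const (by norm_num))

theorem surjective_cubic : Function.Surjective cubic := by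
  intro y
  have hy : y ∈ Icc (cubic (-|y|)) (cubic |y|) := by
    constructor <;> simp only [cubic] <;>
      nlinarith [neg_abs_le y, le_abs_self y, pow_nonneg (abs_nonneg y) 3]
  obtain ⟨t, -, ht⟩ := intermediate_value_Icc (neg_le_self (abs_nonneg y))
    (contDiff_cubic (n := 0)).continuous.continuousOn hy
  exact ⟨t, ht⟩

def cubicHomeomorph : ℝ ≃ₜ ℝ :=
  (strictMono_cubic.orderIsoOfSurjective cubic surjective_cubic).toHomeomorph

def cubicInv : ℝ → ℝ := cubicHomeomorph.symm

theorem cubic_cubicInv (x : ℝ) : cubic (cubicInv x) = x :=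
  cubicHomeomorph.apply_symm_apply x

theorem contDiff_cubicInv {n : WithTop ℕ∞} : ContDiff ℝ n cubicInv :=
  cubicHomeomorph.contDiff_symm_deriv (fun t => by positivity) hasDerivAt_cubic contDiff_cubic

theorem hasDerivAt_cubicInv (x : ℝ) : HasDerivAt cubicInv (1 + cubicInv x ^ 2)⁻¹ x :=
  (hasDerivAt_cubic (cubicInv x)).of_local_left_inverse
    cubicHomeomorph.symm.continuous.continuousAt (by positivity) (.of_forall cubic_cubicInv)

def profile (x : ℝ) : ℝ := cubicInv x ^ 2 / 2 + cubicInv x ^ 4 / 4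

theorem contDiff_profile {n : WithTop ℕ∞} : ContDiff ℝ n profile := by
  unfold profile
  have := contDiff_cubicInv (n := n)
  fun_prop

theorem deriv_profile : deriv profile = cubicInv := by
  funext x
  have hg := hasDerivAt_cubicInv x
  refine (((hg.pow 2).div_const 2).add ((hg.pow 4).div_const 4)).deriv.trans ?_
  field_simp
  ring

theorem one_add_sq_deriv_mul_deriv_deriv_profile (x : ℝ) :
    (1 + deriv profile x ^ 2) * deriv (deriv profile) x = 1 := by
  rw [deriv_profile, (hasDerivAt_cubicInv x).deriv]
  field_simp

end

end WrongMinimalSurface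

open WrongMinimalSurface

theorem stmt1 : ∃ u : ℝ → ℝ → ℝ,
    ContDiff ℝ 2 (fun p : ℝ × ℝ => u p.1 p.2) ∧ ¬ IsAffine u ∧
    ∀ x y : ℝ, (1 + (ux u x y) ^ 2) * uxx u x y +
      2 * ux u x y * uy u x y * uxy u x y +
      (1 + (uy u x y) ^ 2) * uyy u x y = 0 := by
  refine ⟨fun x y => profile x + (-profile) y, ?_, ?_, fun x y =>
    wrongMinimalSurface_add_separable x y one_add_sq_deriv_mul_deriv_deriv_profile fun y => by
      rw [one_add_sq_deriv_mul_deriv_deriv_neg, one_add_sq_deriv_mul_deriv_deriv_profile]⟩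
  · exact (contDiff_profile.comp contDiff_fst).add (contDiff_profile.neg.comp contDiff_snd)
  · intro hu
    obtain ⟨a, ha⟩ := hu.exists_ux_eq
    have hconst (x : ℝ) : cubicInv x = a := by
      rw [← ha x 0, ux_add_separable, deriv_profile]
    exact zero_ne_one (cubicHomeomorph.symm.injective ((hconst 0).trans (hconst 1).symm))
end

section
/- Let h : ℝ → ℝ be twice continuously differentiable with (1 + h'(x)²)·h''(x) = 1 for all x ∈ ℝ. Then u(x,y) := h(x) − h(y) is a C² function on ℝ² satisfying (1 + u_x²)·u_xx + 2·u_x·u_y·u_xy + (1 + u_y²)·u_yy = 0 everywhere, and u is not affine. -/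
/-! For `u = h x - h y` the mixed term vanishes and the remaining two terms are
`(1 + h'(x)²) h''(x) - (1 + h'(y)²) h''(y) = 1 - 1`. An affine `u` would force `h'' = 0`,
which the ODE excludes.
The partial-derivative identities below need no smoothness: `deriv (fun t => f t - c) = deriv f`
holds also where `f` is not differentiable. -/

section Separable

variable (f g : ℝ → ℝ) (x y : ℝ)

theorem ux_sub_apply : ux (fun x y => f x - g y) x y = deriv f x :=
  deriv_sub_const _

theorem uy_sub_apply : uy (fun x y => f x - g y) x y = -deriv g y :=
  deriv_const_sub _

theorem uxx_sub_apply : uxx (fun x y => f x - g y) x y = deriv (deriv f) x := by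
  simp only [uxx, ux_sub_apply]

theorem uxy_sub_apply : uxy (fun x y => f x - g y) x y = 0 := by
  simp only [uxy, ux_sub_apply, deriv_const]

theorem uyy_sub_apply : uyy (fun x y => f x - g y) x y = -deriv (deriv g) y := by
  simp only [uyy, uy_sub_apply, deriv.fun_neg]

end Separable

theorem IsAffine.uxx_eq_zero {u : ℝ → ℝ → ℝ} (hu : IsAffine u) (x y : ℝ) : uxx u x y = 0 := by
  obtain ⟨a, b, c, hu⟩ := hu
  have hux : ∀ t, ux u t y = a := fun t => by simp [ux, hu]
  simp only [uxx, hux, deriv_const]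

theorem stmt2 (h : ℝ → ℝ) (hC : ContDiff ℝ 2 h)
    (hode : ∀ x : ℝ, (1 + (deriv h x) ^ 2) * deriv (deriv h) x = 1)
    (u : ℝ → ℝ → ℝ) (hu : ∀ x y : ℝ, u x y = h x - h y) :
    ContDiff ℝ 2 (fun p : ℝ × ℝ => u p.1 p.2) ∧
    (∀ x y : ℝ, (1 + (ux u x y) ^ 2) * uxx u x y +
      2 * ux u x y * uy u x y * uxy u x y +
      (1 + (uy u x y) ^ 2) * uyy u x y = 0) ∧
    ¬ IsAffine u := by
  obtain rfl : u = fun x y => h x - h y := funext₂ hu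
  refine ⟨(hC.comp contDiff_fst).sub (hC.comp contDiff_snd), fun x y => ?_, fun haff => ?_⟩
  · rw [ux_sub_apply, uy_sub_apply, uxx_sub_apply, uxy_sub_apply, uyy_sub_apply]
    linear_combination hode x - hode y
  · have hflat : deriv (deriv h) 0 = 0 := uxx_sub_apply h h 0 0 ▸ haff.uxx_eq_zero 0 0
    simpa [hflat] using hode 0
end

section
/- A twice continuously differentiable function h : ℝ → ℝ satisfying (1 + h'(x)²)·h''(x) = 1 for all x ∈ ℝ exists; for example, h with derivative h'(x) = (1/2^(1/3))·((√(9x²+4)+3x)^(1/3) − (√(9x²+4)−3x)^(1/3)). -/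
/-!
The prescribed `h' = g` is Cardano's formula for the real root `y = g x` of the depressed cubic
`y ^ 3 + 3 * y = 3 * x`, so `g` inverts the increasing diffeomorphism `φ y = y ^ 3 / 3 + y`.
Hence `g' = 1 / φ'(g) = 1 / (1 + g ^ 2)`, and the primitive `h` of `g` satisfies
`(1 + h' ^ 2) * h'' = (1 + g ^ 2) * g' = 1`.
-/

open Real

lemma contDiff_integral_of_contDiff {g : ℝ → ℝ} {n : ℕ} (hg : ContDiff ℝ n g) (a : ℝ) :
    ContDiff ℝ (n + 1) (fun x => ∫ t in a..x, g t) := by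
  have hderiv : deriv (fun x => ∫ t in a..x, g t) = g :=
    funext (hg.continuous.deriv_integral g a)
  refine contDiff_succ_iff_deriv.2 ⟨fun x => ?_, fun h => absurd h (by simp), by rwa [hderiv]⟩
  exact (hg.continuous.integral_hasStrictDerivAt a x).hasDerivAt.differentiableAt

lemma rpow_one_div_three_pow_three {t : ℝ} (ht : 0 ≤ t) : (t ^ ((1 : ℝ) / 3)) ^ 3 = t := by
  simpa using rpow_inv_natCast_pow ht three_ne_zero

noncomputable def cardanoRoot (x : ℝ) : ℝ :=
  (1 / (2 : ℝ) ^ ((1 : ℝ) / 3)) *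
    ((√(9 * x ^ 2 + 4) + 3 * x) ^ ((1 : ℝ) / 3) - (√(9 * x ^ 2 + 4) - 3 * x) ^ ((1 : ℝ) / 3))

lemma sq_three_mul_lt (x : ℝ) : (3 * x) ^ 2 < 9 * x ^ 2 + 4 := by nlinarith

lemma sqrt_add_three_mul_pos (x : ℝ) : 0 < √(9 * x ^ 2 + 4) + 3 * x := by
  linarith [neg_sqrt_lt_of_sq_lt (sq_three_mul_lt x)]

lemma sqrt_sub_three_mul_pos (x : ℝ) : 0 < √(9 * x ^ 2 + 4) - 3 * x := by
  linarith [lt_sqrt_of_sq_lt (sq_three_mul_lt x)]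

lemma cardanoRoot_pow_three_add (x : ℝ) : cardanoRoot x ^ 3 + 3 * cardanoRoot x = 3 * x := by
  set s := √(9 * x ^ 2 + 4)
  set a := (s + 3 * x) ^ ((1 : ℝ) / 3)
  set b := (s - 3 * x) ^ ((1 : ℝ) / 3)
  set c := (2 : ℝ) ^ ((1 : ℝ) / 3)
  have hc : 0 < c := by positivity
  have hc3 : c ^ 3 = 2 := rpow_one_div_three_pow_three (by norm_num)
  have ha3 : a ^ 3 = s + 3 * x := rpow_one_div_three_pow_three (sqrt_add_three_mul_pos x).le
  have hb3 : b ^ 3 = s - 3 * x := rpow_one_div_three_pow_three (sqrt_sub_three_mul_pos x).le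
  have hab : a * b = c ^ 2 := by
    have hprod : (s + 3 * x) * (s - 3 * x) = (c ^ 2) ^ 3 := by
      nlinarith [sq_sqrt (show (0 : ℝ) ≤ 9 * x ^ 2 + 4 by positivity)]
    have hab0 : 0 ≤ a * b :=
      mul_nonneg (rpow_nonneg (sqrt_add_three_mul_pos x).le _)
        (rpow_nonneg (sqrt_sub_three_mul_pos x).le _)
    refine (pow_left_inj₀ hab0 (by positivity) three_ne_zero).1 ?_
    rw [mul_pow, ha3, hb3, hprod]
  have hroot : cardanoRoot x = (a - b) / c := by
    simp only [cardanoRoot, a, b, c, s]; ring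
  rw [hroot]
  field_simp
  -- `(a - b) ^ 3 = a ^ 3 - b ^ 3 - 3 a b (a - b)`, Cardano's key identity.
  linear_combination ha3 - hb3 - 3 * (a - b) * hab - 3 * x * hc3

lemma continuous_cardanoRoot : Continuous cardanoRoot := by
  refine continuous_const.mul (Continuous.sub ?_ ?_)
  · exact continuous_iff_continuousAt.2 fun x =>
      (by fun_prop : Continuous fun x : ℝ => √(9 * x ^ 2 + 4) + 3 * x).continuousAt.rpow_const
        (Or.inl (sqrt_add_three_mul_pos x).ne')
  · exact continuous_iff_continuousAt.2 fun x =>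
      (by fun_prop : Continuous fun x : ℝ => √(9 * x ^ 2 + 4) - 3 * x).continuousAt.rpow_const
        (Or.inl (sqrt_sub_three_mul_pos x).ne')

lemma hasDerivAt_cardanoRoot (x : ℝ) :
    HasDerivAt cardanoRoot (1 + cardanoRoot x ^ 2)⁻¹ x := by
  have hφ : HasDerivAt (fun y : ℝ => y ^ 3 / 3 + y) (1 + cardanoRoot x ^ 2) (cardanoRoot x) := by
    refine (((hasDerivAt_pow 3 _).div_const 3).add (hasDerivAt_id' _)).congr_deriv ?_
    norm_num; ring
  refine hφ.of_local_left_inverse continuous_cardanoRoot.continuousAt (by positivity) ?_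
  exact Filter.Eventually.of_forall fun y => by linarith [cardanoRoot_pow_three_add y]

lemma deriv_cardanoRoot : deriv cardanoRoot = fun x => (1 + cardanoRoot x ^ 2)⁻¹ :=
  funext fun x => (hasDerivAt_cardanoRoot x).deriv

lemma contDiff_one_cardanoRoot : ContDiff ℝ 1 cardanoRoot := by
  refine contDiff_one_iff_deriv.2 ⟨fun x => (hasDerivAt_cardanoRoot x).differentiableAt, ?_⟩
  rw [deriv_cardanoRoot]
  exact (continuous_const.add (continuous_cardanoRoot.pow 2)).inv₀ fun x => (by positivity : (0 : ℝ) < 1 + cardanoRoot x ^ 2).ne'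

theorem stmt4 : ∃ h : ℝ → ℝ, ContDiff ℝ 2 h ∧
    (∀ x : ℝ, (1 + (deriv h x) ^ 2) * deriv (deriv h) x = 1) ∧
    (∀ x : ℝ, deriv h x = (1 / (2 : ℝ) ^ ((1:ℝ)/3)) *
      ((Real.sqrt (9 * x ^ 2 + 4) + 3 * x) ^ ((1:ℝ)/3) -
       (Real.sqrt (9 * x ^ 2 + 4) - 3 * x) ^ ((1:ℝ)/3))) := by
  have hderiv : deriv (fun x => ∫ t in (0 : ℝ)..x, cardanoRoot t) = cardanoRoot :=
    funext (continuous_cardanoRoot.deriv_integral cardanoRoot 0)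
  refine ⟨fun x => ∫ t in (0 : ℝ)..x, cardanoRoot t,
    contDiff_integral_of_contDiff contDiff_one_cardanoRoot 0, fun x => ?_, fun x => ?_⟩
  · rw [hderiv, deriv_cardanoRoot]
    exact mul_inv_cancel₀ (by positivity)
  · rw [hderiv]; rfl
end
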